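/- arXiv:0902.1107 — 6 statements merged into one kernel-verified Lean document; each statement's English description precedes it below -/
import Mathlib

section
/- Let Λ be a totally ordered abelian group, E a set, and ω a projective valuation on E, i.e. a map from ordered quadruples of pairwise distinct elements of E to Λ satisfying (PV1) ω(a,b;c,d)=ω(c,d;a,b)=−ω(a,b;d,c), (PV2) if ω(a,b;c,d)=k>0 then ω(a,d;c,b)=k and ω(a,c;b,d)=0, and (PV3) ω(a,b;d,e)+ω(b,c;d,e)=ω(a,c;d,e). Then for pairwise distinct a, a₁, a₂, a₃ ∈ E, exactly one of the following four cases occurs: (1) ω(a₁,a;a₂,a₃) > 0; (2) ω(a₂,a;a₃,a₁) > 0; (3) ω(a₃,a;a₁,a₂) > 0; (4) ω(a_i,a;a_j,a_k) = 0 for all permutations {i,j,k} = {1,2,3}. -/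
/-!
Fix `a` and write `f x y z = ω(x, a; y, z)`. PV1 and PV2 give a rotation rule: if `f b c d > 0`
then `f c d b = -f b c d` and `f d b c = 0`. Since `f x y z = -f x z y`, applying the rule to the
reversed triple gives its mirror image for negative values: if `f b c d < 0` then `f c d b = 0`
and `f d b c = -f b c d`. Consequently the cyclic values `(f a₁ a₂ a₃, f a₂ a₃ a₁, f a₃ a₁ a₂)`
are either all zero or a cyclic shift of `(t, -t, 0)` with `t > 0`, so exactly one case occurs.
-/

/-- Pairwise distinctness of a quadruple. -/
def Distinct4 {E : Type*} (a b c d : E) : Prop :=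
  a ≠ b ∧ a ≠ c ∧ a ≠ d ∧ b ≠ c ∧ b ≠ d ∧ c ≠ d

def CyclicSignRule {Λ : Type*} [AddCommGroup Λ] [LT Λ] (u v w : Λ) : Prop :=
  (0 < u → v = -u ∧ w = 0) ∧ (u < 0 → v = 0 ∧ w = -u)

theorem CyclicSignRule.exactly_one_pos_or_all_zero {Λ : Type*} [AddCommGroup Λ] [LinearOrder Λ]
    [IsOrderedAddMonoid Λ] {u v w : Λ} (huvw : CyclicSignRule u v w)
    (hvwu : CyclicSignRule v w u) (hwuv : CyclicSignRule w u v) :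
    (0 < u ∨ 0 < v ∨ 0 < w ∨ (u = 0 ∧ v = 0 ∧ w = 0)) ∧
      ¬(0 < u ∧ 0 < v) ∧ ¬(0 < u ∧ 0 < w) ∧ ¬(0 < v ∧ 0 < w) := by
  unfold CyclicSignRule at *
  grind

theorem cyclic_values_of_pos {Λ E : Type*} [AddCommGroup Λ] [LT Λ] (ω : E → E → E → E → Λ)
    (pv1 : ∀ a b c d, Distinct4 a b c d → ω a b c d = ω c d a b)
    (pv1' : ∀ a b c d, Distinct4 a b c d → ω a b c d = -ω a b d c)
    (pv2 : ∀ a b c d, Distinct4 a b c d → 0 < ω a b c d →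
      ω a d c b = ω a b c d ∧ ω a c b d = 0)
    {a b c d : E} (h : Distinct4 a b c d) (hpos : 0 < ω b a c d) :
    ω c a d b = -ω b a c d ∧ ω d a b c = 0 := by
  obtain ⟨hcycle, hzero⟩ := pv2 b a c d (by grind only [Distinct4]) hpos
  constructor
  · calc ω c a d b = -ω c a b d := pv1' c a d b (by grind only [Distinct4])
      _ = -ω b d c a := by rw [pv1 b d c a (by grind only [Distinct4])]
      _ = -ω b a c d := by rw [hcycle]
  · calc ω d a b c = ω b c d a := (pv1 b c d a (by grind only [Distinct4])).symm
      _ = -ω b c a d := pv1' b c d a (by grind only [Distinct4])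
      _ = 0 := by rw [hzero, neg_zero]

theorem cyclicSignRule_cyclic_values {Λ E : Type*} [AddCommGroup Λ] [LinearOrder Λ]
    [IsOrderedAddMonoid Λ] (ω : E → E → E → E → Λ)
    (pv1 : ∀ a b c d, Distinct4 a b c d → ω a b c d = ω c d a b)
    (pv1' : ∀ a b c d, Distinct4 a b c d → ω a b c d = -ω a b d c)
    (pv2 : ∀ a b c d, Distinct4 a b c d → 0 < ω a b c d →
      ω a d c b = ω a b c d ∧ ω a c b d = 0)
    {a b c d : E} (h : Distinct4 a b c d) :
    CyclicSignRule (ω b a c d) (ω c a d b) (ω d a b c) := by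
  refine ⟨cyclic_values_of_pos ω pv1 pv1' pv2 h, fun hneg => ?_⟩
  have hswap : ω b a c d = -ω b a d c := pv1' b a c d (by grind only [Distinct4])
  obtain ⟨hcycle, hzero⟩ := cyclic_values_of_pos ω pv1 pv1' pv2
    (show Distinct4 a b d c by grind only [Distinct4]) (by rwa [hswap, neg_lt_zero] at hneg)
  constructor
  · rw [pv1' c a d b (by grind only [Distinct4]), hzero, neg_zero]
  · rw [pv1' d a b c (by grind only [Distinct4]), hcycle, hswap]

theorem stmt6_general {Λ E : Type*} [AddCommGroup Λ] [LinearOrder Λ] [IsOrderedAddMonoid Λ]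
    (ω : E → E → E → E → Λ)
    (pv1 : ∀ a b c d, Distinct4 a b c d → ω a b c d = ω c d a b)
    (pv1' : ∀ a b c d, Distinct4 a b c d → ω a b c d = -ω a b d c)
    (pv2 : ∀ a b c d, Distinct4 a b c d → 0 < ω a b c d →
      ω a d c b = ω a b c d ∧ ω a c b d = 0)
    (a a1 a2 a3 : E) (h : Distinct4 a a1 a2 a3) :
    let P1 := 0 < ω a1 a a2 a3
    let P2 := 0 < ω a2 a a3 a1
    let P3 := 0 < ω a3 a a1 a2
    let P4 := ω a1 a a2 a3 = 0 ∧ ω a2 a a3 a1 = 0 ∧ ω a3 a a1 a2 = 0 ∧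
      ω a1 a a3 a2 = 0 ∧ ω a2 a a1 a3 = 0 ∧ ω a3 a a2 a1 = 0
    (P1 ∨ P2 ∨ P3 ∨ P4) ∧ ¬(P1 ∧ P2) ∧ ¬(P1 ∧ P3) ∧ ¬(P1 ∧ P4) ∧
      ¬(P2 ∧ P3) ∧ ¬(P2 ∧ P4) ∧ ¬(P3 ∧ P4) := by
  intro P1 P2 P3 P4
  have hrev1 : ω a1 a a3 a2 = -ω a1 a a2 a3 := pv1' a1 a a3 a2 (by grind only [Distinct4])
  have hrev2 : ω a2 a a1 a3 = -ω a2 a a3 a1 := pv1' a2 a a1 a3 (by grind only [Distinct4])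
  have hrev3 : ω a3 a a2 a1 = -ω a3 a a1 a2 := pv1' a3 a a2 a1 (by grind only [Distinct4])
  have h231 : Distinct4 a a2 a3 a1 := by grind only [Distinct4]
  have h312 : Distinct4 a a3 a1 a2 := by grind only [Distinct4]
  obtain ⟨hcases, h12, h13, h23⟩ := CyclicSignRule.exactly_one_pos_or_all_zero
    (cyclicSignRule_cyclic_values ω pv1 pv1' pv2 h)
    (cyclicSignRule_cyclic_values ω pv1 pv1' pv2 h231)
    (cyclicSignRule_cyclic_values ω pv1 pv1' pv2 h312)
  simp only [P1, P2, P3, P4, hrev1, hrev2, hrev3, neg_eq_zero]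
  grind

/-- The 3-point lemma for projective valuations: for pairwise distinct `a, a₁, a₂, a₃`,
exactly one of the four cases occurs: one of the three cyclic values is positive, or all
values `ω(a_i, a; a_j, a_k)` vanish. -/
theorem stmt6 {Λ E : Type*} [AddCommGroup Λ] [LinearOrder Λ] [IsOrderedAddMonoid Λ]
    (ω : E → E → E → E → Λ)
    (pv1 : ∀ a b c d, Distinct4 a b c d → ω a b c d = ω c d a b)
    (pv1' : ∀ a b c d, Distinct4 a b c d → ω a b c d = -ω a b d c)
    (pv2 : ∀ a b c d, Distinct4 a b c d → 0 < ω a b c d →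
      ω a d c b = ω a b c d ∧ ω a c b d = 0)
    (pv3 : ∀ a b c d e, Distinct4 a b d e → Distinct4 b c d e → Distinct4 a c d e →
      ω a b d e + ω b c d e = ω a c d e)
    (a a1 a2 a3 : E) (h : Distinct4 a a1 a2 a3) :
    let P1 := 0 < ω a1 a a2 a3
    let P2 := 0 < ω a2 a a3 a1
    let P3 := 0 < ω a3 a a1 a2
    let P4 := ω a1 a a2 a3 = 0 ∧ ω a2 a a3 a1 = 0 ∧ ω a3 a a1 a2 = 0 ∧
      ω a1 a a3 a2 = 0 ∧ ω a2 a a1 a3 = 0 ∧ ω a3 a a2 a1 = 0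
    (P1 ∨ P2 ∨ P3 ∨ P4) ∧ ¬(P1 ∧ P2) ∧ ¬(P1 ∧ P3) ∧ ¬(P1 ∧ P4) ∧
      ¬(P2 ∧ P3) ∧ ¬(P2 ∧ P4) ∧ ¬(P3 ∧ P4) :=
  stmt6_general ω pv1 pv1' pv2 a a1 a2 a3 h
end

section
/- Let Λ be a totally ordered abelian group and (E, ∧) a rooted tree datum, i.e. a map ∧ : E × E → Λ ∪ {±∞} satisfying (RT0) x∧y ≥ 0, (RT1) x∧y = y∧x, (RT2) x∧z ≥ min{x∧y, y∧z} for all x,y,z ∈ E. On Σ = {(x,t) ∈ E × Λ : 0 ≤ t ≤ x∧x} define d((x,s),(y,t)) = |s − t| if s ≤ x∧y or t ≤ x∧y, and d((x,s),(y,t)) = |s − x∧y| + |t − x∧y| if s ≥ x∧y and t ≥ x∧y. Then d is a pseudometric on Σ: d is well-defined (the two cases agree on their overlap), nonnegative, symmetric, d((x,s),(x,s)) = 0, and satisfies the triangle inequality. -/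
/-!
Write `c = min(s, t, x∧y)` for the height at which the segments from the root to `(x,s)` and
`(y,t)` part. In both cases of its definition, `d((x,s),(y,t)) = (s - c) + (t - c)`, which makes
nonnegativity and symmetry plain. For the triangle inequality through `(y,t)`, (RT2) gives
`c(x,z) ≥ min(c(x,y), c(y,z))` while `max(c(x,y), c(y,z)) ≤ t`, so
`c(x,y) + c(y,z) ≤ c(x,z) + t`, which is the inequality after rearranging.
-/

section

variable {Λ : Type*} [LinearOrder Λ]

theorem exists_coe_eq_min_min_coe {w : WithBot (WithTop Λ)} (hw : w ≠ ⊥) (s t : Λ) :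
    ∃ c : Λ, ((c : WithTop Λ) : WithBot (WithTop Λ)) =
      min (min ((s : WithTop Λ) : WithBot (WithTop Λ))
        ((t : WithTop Λ) : WithBot (WithTop Λ))) w := by
  induction w using WithBot.recBotCoe with
  | bot => exact absurd rfl hw
  | coe w =>
    induction w using WithTop.recTopCoe with
    | top => exact ⟨min s t, by simp⟩
    | coe w => exact ⟨min (min s t) w, by simp⟩

theorem le_and_le_of_coe_eq_min {s t c : Λ} {w : WithBot (WithTop Λ)}
    (hc : ((c : WithTop Λ) : WithBot (WithTop Λ)) =
      min (min ((s : WithTop Λ) : WithBot (WithTop Λ))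
        ((t : WithTop Λ) : WithBot (WithTop Λ))) w) :
    c ≤ s ∧ c ≤ t := by
  have := hc.le
  simp only [le_min_iff, WithBot.coe_le_coe, WithTop.coe_le_coe] at this
  exact this.1

end

theorem min_min_le_min_of_min_le {α : Type*} [LinearOrder α] {s t u a b c : α}
    (h : min a b ≤ c) : min (min (min s t) a) (min (min t u) b) ≤ min (min s u) c := by
  refine le_min (le_min ?_ ?_) (le_trans (min_le_min (min_le_right _ _) (min_le_right _ _)) h)
  · exact (min_le_left _ _).trans ((min_le_left _ _).trans (min_le_left _ _))
  · exact (min_le_right _ _).trans ((min_le_left _ _).trans (min_le_right _ _))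

section

variable {Λ : Type*} [AddCommGroup Λ] [LinearOrder Λ] [IsOrderedAddMonoid Λ]

theorem abs_sub_eq_abs_sub_add_abs_sub {s t c : Λ} (h : s ≤ c ∨ t ≤ c) (hcs : c ≤ s)
    (hct : c ≤ t) : |s - t| = |s - c| + |t - c| := by
  rcases h with h | h
  · obtain rfl := le_antisymm h hcs
    simp [abs_sub_comm]
  · obtain rfl := le_antisymm h hct
    simp

theorem sub_add_sub_le_of_min_le {s t u a b c : Λ} (hat : a ≤ t) (hbt : b ≤ t)
    (hc : min a b ≤ c) : (s - c) + (u - c) ≤ (s - a) + (t - a) + ((t - b) + (u - b)) := by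
  have hsum : a + b ≤ c + t := min_add_max a b ▸ add_le_add hc (max_le hat hbt)
  calc (s - c) + (u - c)
      = (s - a) + (t - a) + ((t - b) + (u - b)) - 2 • (c + t - (a + b)) := by abel
    _ ≤ (s - a) + (t - a) + ((t - b) + (u - b)) :=
      sub_le_self _ (nsmul_nonneg (sub_nonneg.2 hsum) 2)

theorem eq_sub_add_sub_of_coe_eq_min {s t c δ : Λ} {w : WithBot (WithTop Λ)}
    (hc : ((c : WithTop Λ) : WithBot (WithTop Λ)) =
      min (min ((s : WithTop Λ) : WithBot (WithTop Λ))
        ((t : WithTop Λ) : WithBot (WithTop Λ))) w)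
    (h₁ : ((s : WithTop Λ) : WithBot (WithTop Λ)) ≤ w ∨
      ((t : WithTop Λ) : WithBot (WithTop Λ)) ≤ w → δ = |s - t|)
    (h₂ : w = ((c : WithTop Λ) : WithBot (WithTop Λ)) → c ≤ s → c ≤ t →
      δ = |s - c| + |t - c|) :
    δ = (s - c) + (t - c) := by
  obtain ⟨hcs, hct⟩ := le_and_le_of_coe_eq_min hc
  rw [abs_of_nonneg (sub_nonneg.2 hcs), abs_of_nonneg (sub_nonneg.2 hct)] at h₂
  by_cases h : ((s : WithTop Λ) : WithBot (WithTop Λ)) ≤ w ∨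
      ((t : WithTop Λ) : WithBot (WithTop Λ)) ≤ w
  · have hmin : c = min s t := by
      rw [min_eq_left (h.elim min_le_of_left_le min_le_of_right_le)] at hc
      exact_mod_cast hc
    rw [h₁ h, hmin, ← max_sub_min_eq_abs', eq_sub_of_add_eq' (min_add_max s t)]
    abel
  · obtain ⟨hws, hwt⟩ := not_or.1 h
    have hw : w = ((c : WithTop Λ) : WithBot (WithTop Λ)) :=
      (hc.trans (min_eq_right (le_min (not_le.1 hws).le (not_le.1 hwt).le))).symm
    exact h₂ hw hcs hct

end

/-- For a rooted tree datum `(E, ∧)` with values in `Λ ∪ {±∞}`, the Alperin–Bass distance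
`d` on `Σ = {(x,t) : 0 ≤ t ≤ x∧x}`, given by `|s − t|` when `s ≤ x∧y` or `t ≤ x∧y`, and by
`|s − x∧y| + |t − x∧y|` when `s, t ≥ x∧y`, is a well-defined pseudometric: the two cases
agree on their overlap, and `d` is nonnegative, symmetric, vanishes on the diagonal, and
satisfies the triangle inequality. -/
theorem stmt7 {Λ E : Type*} [AddCommGroup Λ] [LinearOrder Λ] [IsOrderedAddMonoid Λ]
    (wedge : E → E → WithBot (WithTop Λ))
    (rt0 : ∀ x y, 0 ≤ wedge x y)
    (rt1 : ∀ x y, wedge x y = wedge y x)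
    (rt2 : ∀ x y z, min (wedge x y) (wedge y z) ≤ wedge x z)
    (InSigma : E → Λ → Prop)
    (hSigma : ∀ x s, InSigma x s ↔
      0 ≤ s ∧ (((s : WithTop Λ) : WithBot (WithTop Λ)) ≤ wedge x x))
    (d : E → Λ → E → Λ → Λ)
    (hd1 : ∀ x s y t, InSigma x s → InSigma y t →
      (((s : WithTop Λ) : WithBot (WithTop Λ)) ≤ wedge x y ∨
        ((t : WithTop Λ) : WithBot (WithTop Λ)) ≤ wedge x y) →
      d x s y t = |s - t|)
    (hd2 : ∀ x s y t (c : Λ), InSigma x s → InSigma y t →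
      wedge x y = ((c : WithTop Λ) : WithBot (WithTop Λ)) → c ≤ s → c ≤ t →
      d x s y t = |s - c| + |t - c|) :
    (∀ (x : E) (s : Λ) (y : E) (t : Λ) (c : Λ), InSigma x s → InSigma y t →
      wedge x y = ((c : WithTop Λ) : WithBot (WithTop Λ)) →
      (s ≤ c ∨ t ≤ c) → c ≤ s → c ≤ t → |s - t| = |s - c| + |t - c|) ∧
    (∀ x s y t, InSigma x s → InSigma y t → 0 ≤ d x s y t) ∧
    (∀ x s y t, InSigma x s → InSigma y t → d x s y t = d y t x s) ∧
    (∀ x s, InSigma x s → d x s x s = 0) ∧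
    (∀ x s y t z u, InSigma x s → InSigma y t → InSigma z u →
      d x s z u ≤ d x s y t + d y t z u) := by
  have wedge_ne_bot : ∀ x y, wedge x y ≠ ⊥ := fun x y =>
    ne_bot_of_le_ne_bot (by simp) (rt0 x y)
  choose c hc using fun x s y t => exists_coe_eq_min_min_coe (wedge_ne_bot x y) s t
  have hcs : ∀ x s y t, c x s y t ≤ s := fun x s y t => (le_and_le_of_coe_eq_min (hc x s y t)).1
  have hct : ∀ x s y t, c x s y t ≤ t := fun x s y t => (le_and_le_of_coe_eq_min (hc x s y t)).2
  have hdist : ∀ x s y t, InSigma x s → InSigma y t →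
      d x s y t = (s - c x s y t) + (t - c x s y t) := fun x s y t hs ht =>
    eq_sub_add_sub_of_coe_eq_min (hc x s y t) (hd1 x s y t hs ht) (hd2 x s y t _ hs ht)
  refine ⟨fun x s y t c _ _ _ => abs_sub_eq_abs_sub_add_abs_sub, ?_, ?_, ?_, ?_⟩
  · intro x s y t hs ht
    rw [hdist x s y t hs ht]
    exact add_nonneg (sub_nonneg.2 (hcs x s y t)) (sub_nonneg.2 (hct x s y t))
  · intro x s y t hs ht
    have hsymm : ((c x s y t : WithTop Λ) : WithBot (WithTop Λ)) =
        ((c y t x s : WithTop Λ) : WithBot (WithTop Λ)) := by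
      rw [hc, hc, rt1 x y, min_comm (a := ((s : WithTop Λ) : WithBot (WithTop Λ)))]
    rw [hdist x s y t hs ht, hdist y t x s ht hs, WithTop.coe_inj.1 (WithBot.coe_inj.1 hsymm),
      add_comm]
  · intro x s hs
    rw [hd1 x s x s hs hs (.inl ((hSigma x s).1 hs).2), sub_self, abs_zero]
  · intro x s y t z u hs ht hu
    rw [hdist x s z u hs hu, hdist x s y t hs ht, hdist y t z u ht hu]
    refine sub_add_sub_le_of_min_le (hct x s y t) (hcs y t z u) ?_
    have : (((min (c x s y t) (c y t z u) : Λ) : WithTop Λ) : WithBot (WithTop Λ)) ≤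
        ((c x s z u : WithTop Λ) : WithBot (WithTop Λ)) := by
      rw [WithTop.coe_min, WithBot.coe_min, hc, hc, hc]
      exact min_min_le_min_of_min_le (rt2 x y z)
    exact_mod_cast this
end

section
/- Let K be a field of characteristic 2 with an endomorphism θ satisfying (x^θ)^θ = x² for all x, and let ν : K* → ℝ be a valuation (ν(ab) = ν(a) + ν(b), ν(a+b) ≥ min{ν(a),ν(b)}) which is θ-invariant, i.e. ν(x^θ) = √2·ν(x) for all x ∈ K*. Define R(s,t) = t^{θ+2} + st + s^θ (where t^{θ+2} means t^θ·t²). Then for all (s,t) ≠ (0,0): ν(R(s,t)) = min{√2·ν(s), (√2+2)·ν(t)} (with the convention ν(0) = +∞). -/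
/-!
Write `X = ν(θ s)`, `Y = ν(θ t · t²)` and `Z = ν(s t)` for the valuations of the three terms of
`R(s,t)`. Since `1/√2 + 1/(√2+2) = 1`, the value `Z = ν s + ν t = X/√2 + Y/(√2+2)` is a weighted
mean of `X` and `Y`. So unless `X = Y`, the smaller of `X` and `Y` is attained by exactly one
term, and the ultrametric inequality gives `ν(R) = min X Y`.

If `X = Y = Z`, put `u = t θ(t) / s`, so that `ν u = 0` and `R · θ(u) = s t · (u θ(u) + θ(u) + u)`.
It remains to see that `P = u θ(u) + θ(u) + u` is a unit of the valuation ring. Clearly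
`ν P ≥ 0`; conversely, in characteristic 2 and using `θ(θ u) = u²`, one checks
`u = (u + 1) P + θ(P)`, so `ν P > 0` would force `ν u > 0`.
-/

structure IsERealValuation {K : Type*} [Field K] (ν : K → EReal) : Prop where
  map_zero : ν 0 = ⊤
  ne_top : ∀ x, x ≠ 0 → ν x ≠ ⊤
  ne_bot : ∀ x, ν x ≠ ⊥
  map_mul : ∀ a b, ν (a * b) = ν a + ν b
  min_le_map_add : ∀ a b, min (ν a) (ν b) ≤ ν (a + b)

def suzukiNorm {K : Type*} [Field K] (θ : K →+* K) (s t : K) : K :=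
  θ t * t ^ 2 + s * t + θ s

theorem sqrt_two_add_two_mul_add (a b : ℝ) :
    (√2 + 2) * (a + b) = (√2 + 1) * (√2 * a) + (√2 + 2) * b := by
  linear_combination (-a) * Real.mul_self_sqrt (zero_le_two : (0 : ℝ) ≤ 2)

namespace IsERealValuation

variable {K : Type*} [Field K] {ν : K → EReal}

theorem exists_eq_coe (hν : IsERealValuation ν) {x : K} (hx : x ≠ 0) : ∃ c : ℝ, ν x = c :=
  ⟨(ν x).toReal, (EReal.coe_toReal (hν.ne_top x hx) (hν.ne_bot x)).symm⟩

theorem map_eq_zero_of_mul_self_eq_one (hν : IsERealValuation ν) {x : K} (hx : x * x = 1) :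
    ν x = 0 := by
  obtain ⟨c, hc⟩ := hν.exists_eq_coe (left_ne_zero_of_mul_eq_one hx)
  have hc1 : ((c + c : ℝ) : EReal) = ν 1 := by rw [EReal.coe_add, ← hc, ← hν.map_mul, hx]
  obtain ⟨d, hd⟩ := hν.exists_eq_coe one_ne_zero
  have hd1 : ((d + d : ℝ) : EReal) = d := by rw [EReal.coe_add, ← hd, ← hν.map_mul, one_mul]
  have hd0 : d = 0 := by have := EReal.coe_injective hd1; linarith
  rw [hd, hd0] at hc1
  rw [hc, show c = 0 by have := EReal.coe_injective hc1; linarith, EReal.coe_zero]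

theorem map_one (hν : IsERealValuation ν) : ν 1 = 0 :=
  hν.map_eq_zero_of_mul_self_eq_one (one_mul 1)

theorem map_neg (hν : IsERealValuation ν) (x : K) : ν (-x) = ν x := by
  rw [neg_eq_neg_one_mul, hν.map_mul, hν.map_eq_zero_of_mul_self_eq_one (by ring), zero_add]

theorem map_inv (hν : IsERealValuation ν) {x : K} (hx : x ≠ 0) : ν x⁻¹ = -ν x := by
  obtain ⟨c, hc⟩ := hν.exists_eq_coe hx
  obtain ⟨d, hd⟩ := hν.exists_eq_coe (inv_ne_zero hx)
  have hcd : ((c + d : ℝ) : EReal) = 0 := by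
    rw [EReal.coe_add, ← hc, ← hd, ← hν.map_mul, mul_inv_cancel₀ hx, hν.map_one]
  rw [hc, hd, ← EReal.coe_neg, show d = -c by have := EReal.coe_eq_zero.mp hcd; linarith]

theorem le_map_add (hν : IsERealValuation ν) {c : EReal} {x y : K} (hx : c ≤ ν x)
    (hy : c ≤ ν y) : c ≤ ν (x + y) :=
  (le_min hx hy).trans (hν.min_le_map_add x y)

theorem lt_map_add (hν : IsERealValuation ν) {c : EReal} {x y : K} (hx : c < ν x)
    (hy : c < ν y) : c < ν (x + y) :=
  (lt_min hx hy).trans_le (hν.min_le_map_add x y)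

theorem map_add_eq_of_lt (hν : IsERealValuation ν) {x y : K} (h : ν x < ν y) :
    ν (x + y) = ν x := by
  refine le_antisymm ?_ (hν.le_map_add le_rfl h.le)
  by_contra! hxy
  have := hν.lt_map_add hxy (h.trans_eq (hν.map_neg y).symm)
  rw [add_neg_cancel_right] at this
  exact this.false

variable {θ : K →+* K} {c : ℝ}

theorem map_apply_mul_sq (hν : IsERealValuation ν) (hνθ : ∀ x, ν (θ x) = c * ν x) {t : K}
    (ht : t ≠ 0) : ν (θ t * t ^ 2) = ((c + 2 : ℝ) : EReal) * ν t := by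
  obtain ⟨b, hb⟩ := hν.exists_eq_coe ht
  rw [hν.map_mul, hνθ, pow_two, hν.map_mul, hb]
  norm_cast
  ring

theorem map_mul_apply_add_apply_add_eq_zero [CharP K 2] (hν : IsERealValuation ν)
    (hθ : ∀ x, θ (θ x) = x ^ 2) (hc : 0 < c) (hνθ : ∀ x, ν (θ x) = c * ν x) {u : K}
    (hu : ν u = 0) : ν (u * θ u + θ u + u) = 0 := by
  have hdecomp : u = (u + 1) * (u * θ u + θ u + u) + θ (u * θ u + θ u + u) := by
    simp only [map_add, _root_.map_mul, hθ]
    linear_combination (-(u ^ 2 * θ u + u * θ u + u ^ 2 + θ u)) * CharTwo.two_eq_zero (R := K)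
  set P := u * θ u + θ u + u
  have hθu : ν (θ u) = 0 := by rw [hνθ, hu, mul_zero]
  refine le_antisymm ?_ ?_
  · by_contra! hP
    have hu1 : 0 ≤ ν (u + 1) := hν.le_map_add hu.ge hν.map_one.ge
    have h₁ : 0 < ν ((u + 1) * P) := by
      rw [hν.map_mul]
      exact hP.trans_le (le_add_of_nonneg_left hu1)
    have h₂ : 0 < ν (θ P) := by
      rw [hνθ]
      exact EReal.mul_pos (by exact_mod_cast hc) hP
    have := hν.lt_map_add h₁ h₂
    rw [← hdecomp, hu] at this
    exact this.false
  · have huθu : 0 ≤ ν (u * θ u) := by rw [hν.map_mul, hu, hθu, add_zero]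
    exact hν.le_map_add (hν.le_map_add huθu hθu.ge) hu.ge

theorem map_suzukiNorm_of_map_eq [CharP K 2] (hν : IsERealValuation ν)
    (hθ : ∀ x, θ (θ x) = x ^ 2) (hc : 0 < c) (hνθ : ∀ x, ν (θ x) = c * ν x) {s t : K}
    (hs : s ≠ 0) (h : ν (θ s) = ν (θ t * t ^ 2)) : ν (suzukiNorm θ s t) = ν (s * t) := by
  have hθs : θ s ≠ 0 := (map_ne_zero θ).mpr hs
  have key : suzukiNorm θ s t * θ (t * θ t * s⁻¹) =
      s * t * (t * θ t * s⁻¹ * θ (t * θ t * s⁻¹) + θ (t * θ t * s⁻¹) + t * θ t * s⁻¹) := by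
    simp only [suzukiNorm, _root_.map_mul, map_inv₀, hθ]
    field_simp
  set u := t * θ t * s⁻¹
  have hθu : ν (θ u) = 0 := by
    rw [show θ u = θ t * t ^ 2 * (θ s)⁻¹ by simp [u, hθ], hν.map_mul, hν.map_inv hθs, ← h,
      ← sub_eq_add_neg, EReal.sub_self (hν.ne_top _ hθs) (hν.ne_bot _)]
  have hu : ν u = 0 := by
    rw [hνθ] at hθu
    exact (mul_eq_zero.mp hθu).resolve_left (by exact_mod_cast hc.ne')
  have := congrArg ν key
  rwa [hν.map_mul, hν.map_mul (s * t), hθu,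
    hν.map_mul_apply_add_apply_add_eq_zero hθ hc hνθ hu, add_zero, add_zero] at this

theorem map_suzukiNorm_of_ne_zero [CharP K 2] (hν : IsERealValuation ν)
    (hθ : ∀ x, θ (θ x) = x ^ 2) (hνθ : ∀ x, ν (θ x) = ((√2 : ℝ) : EReal) * ν x) {s t : K}
    (hs : s ≠ 0) (ht : t ≠ 0) :
    ν (suzukiNorm θ s t) = min (((√2 : ℝ) : EReal) * ν s) (((√2 + 2 : ℝ) : EReal) * ν t) := by
  have hsqrt : (0 : ℝ) < √2 := by positivity
  obtain ⟨a, ha⟩ := hν.exists_eq_coe hs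
  obtain ⟨b, hb⟩ := hν.exists_eq_coe ht
  have hX : ν (θ s) = (√2 * a : ℝ) := by rw [hνθ, ha]; rfl
  have hY : ν (θ t * t ^ 2) = ((√2 + 2) * b : ℝ) := by rw [hν.map_apply_mul_sq hνθ ht, hb]; rfl
  have hZ : ν (s * t) = (a + b : ℝ) := by rw [hν.map_mul, ha, hb]; rfl
  have hmean := sqrt_two_add_two_mul_add a b
  rw [← hνθ, ← hν.map_apply_mul_sq hνθ ht]
  rcases lt_trichotomy (√2 * a) ((√2 + 2) * b) with h | h | h
  · have hXY : ν (θ s) < ν (θ t * t ^ 2) := by rw [hX, hY]; exact_mod_cast h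
    have hXZ : ν (θ s) < ν (s * t) := by rw [hX, hZ]; norm_cast; nlinarith
    rw [show suzukiNorm θ s t = θ s + (θ t * t ^ 2 + s * t) by rw [suzukiNorm]; ring,
      hν.map_add_eq_of_lt (hν.lt_map_add hXY hXZ), min_eq_left hXY.le]
  · have hXZ : ν (s * t) = ν (θ s) := by rw [hX, hZ]; norm_cast; nlinarith
    have hXY : ν (θ s) = ν (θ t * t ^ 2) := by rw [hX, hY, h]
    rw [hν.map_suzukiNorm_of_map_eq hθ hsqrt hνθ hs hXY, hXZ, hXY, min_self]
  · have hYX : ν (θ t * t ^ 2) < ν (θ s) := by rw [hX, hY]; exact_mod_cast h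
    have hYZ : ν (θ t * t ^ 2) < ν (s * t) := by rw [hY, hZ]; norm_cast; nlinarith
    rw [suzukiNorm, add_assoc, hν.map_add_eq_of_lt (hν.lt_map_add hYZ hYX), min_eq_right hYX.le]

end IsERealValuation

/-- For a field `K` of characteristic 2 with Tits endomorphism `θ` and a `θ`-invariant
valuation `ν` (with `ν(0) = ⊤`), the Suzuki norm `R(s,t) = t^{θ+2} + st + s^θ` satisfies
`ν(R(s,t)) = min{√2·ν(s), (√2+2)·ν(t)}` for all `(s,t) ≠ (0,0)`. -/
theorem stmt8 {K : Type*} [Field K] [CharP K 2]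
    (θ : K →+* K) (hθ : ∀ x, θ (θ x) = x ^ 2)
    (ν : K → EReal) (hν0 : ν 0 = ⊤)
    (hνtop : ∀ x : K, x ≠ 0 → ν x ≠ ⊤) (hνbot : ∀ x : K, ν x ≠ ⊥)
    (hνmul : ∀ a b : K, ν (a * b) = ν a + ν b)
    (hνadd : ∀ a b : K, min (ν a) (ν b) ≤ ν (a + b))
    (hνθ : ∀ x : K, ν (θ x) = ((Real.sqrt 2 : ℝ) : EReal) * ν x)
    (s t : K) (hst : ¬(s = 0 ∧ t = 0)) :
    ν (θ t * t ^ 2 + s * t + θ s)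
      = min (((Real.sqrt 2 : ℝ) : EReal) * ν s)
          ((((Real.sqrt 2 + 2 : ℝ)) : EReal) * ν t) := by
  have hν : IsERealValuation ν := ⟨hν0, hνtop, hνbot, hνmul, hνadd⟩
  by_cases ht : t = 0
  · subst ht
    rw [hν0, EReal.coe_mul_top_of_pos (by positivity)]
    simp [hνθ]
  by_cases hs : s = 0
  · subst hs
    simp [hν0, hν.map_apply_mul_sq hνθ ht, EReal.coe_mul_top_of_pos (by positivity : (0 : ℝ) < √2)]
  exact hν.map_suzukiNorm_of_ne_zero hθ hνθ hs ht
end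

section
/- Let K be a field of characteristic 2 with Tits endomorphism θ (θ∘θ(x) = x²). Then K × K with the operation (s,t)*(u,v) = (s + u + t^θ v, t + v) is a group with identity (0,0), and the inverse of (s,t) is (s + t^{θ+1}, t), where t^{θ+1} = t^θ·t. Moreover the norm R(s,t) = t^{θ+2} + st + s^θ satisfies R(s + t^{θ+1}, t) = R(s,t), i.e. R is invariant under inversion. -/
/-- For a field `K` of characteristic 2 with Tits endomorphism `θ`, the set `K × K` with
operation `(s,t)*(u,v) = (s + u + t^θ v, t + v)` is a group with identity `(0,0)` and
inverse `(s,t)⁻¹ = (s + t^{θ+1}, t)`, and the norm `R(s,t) = t^{θ+2} + st + s^θ` is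
invariant under inversion. -/
theorem stmt10 {K : Type*} [Field K] [CharP K 2]
    (θ : K →+* K) (hθ : ∀ x, θ (θ x) = x ^ 2)
    (mul : K × K → K × K → K × K)
    (hmul : ∀ a b, mul a b = (a.1 + b.1 + θ a.2 * b.2, a.2 + b.2))
    (R : K × K → K) (hR : ∀ a, R a = θ a.2 * a.2 ^ 2 + a.1 * a.2 + θ a.1) :
    (∀ a b c, mul (mul a b) c = mul a (mul b c)) ∧
    (∀ a, mul ((0 : K), (0 : K)) a = a) ∧
    (∀ a, mul a ((0 : K), (0 : K)) = a) ∧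
    (∀ s t : K, mul (s, t) (s + θ t * t, t) = ((0 : K), (0 : K)) ∧
      mul (s + θ t * t, t) (s, t) = ((0 : K), (0 : K))) ∧
    (∀ s t : K, R (s + θ t * t, t) = R (s, t)) := by
  have htwo : (2 : K) = 0 := by exact_mod_cast CharP.cast_eq_zero K 2
  refine ⟨?_, ?_, ?_, ?_, ?_⟩
  · intro a b c
    simp only [hmul, map_add, Prod.mk.injEq]
    constructor <;> ring
  · intro a; simp [hmul]
  · intro a; simp [hmul]
  · intro s t
    constructor <;> simp only [hmul, Prod.mk.injEq] <;>
      exact ⟨by linear_combination (s + θ t * t) * htwo, by linear_combination t * htwo⟩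
  · intro s t
    simp only [hR, map_add, map_mul, hθ]
    linear_combination (θ t * t ^ 2) * htwo
end

section
/- Let K be a field of characteristic 3 with Tits endomorphism θ (θ∘θ(x) = x³). Then K³ with the operation (r,s,t)*(w,u,v) = (r + w, s + u + r^θ w, t + v − ru + sw − r^{θ+1}w) is a group with identity (0,0,0), and the inverse of (r,s,t) is (−r, −s + r^{θ+1}, −t), where r^{θ+1} = r^θ·r. -/
/-- For a field `K` of characteristic 3 with Tits endomorphism `θ`, the set `K³` with
operation `(r,s,t)*(w,u,v) = (r+w, s+u+r^θ w, t+v−ru+sw−r^{θ+1}w)` is a group with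
identity `(0,0,0)` and inverse `(r,s,t)⁻¹ = (−r, −s + r^{θ+1}, −t)`. -/
theorem stmt11 {K : Type*} [Field K] [CharP K 3]
    (θ : K →+* K) (hθ : ∀ x, θ (θ x) = x ^ 3)
    (mul : K × K × K → K × K × K → K × K × K)
    (hmul : ∀ a b, mul a b =
      (a.1 + b.1, a.2.1 + b.2.1 + θ a.1 * b.1,
        a.2.2 + b.2.2 - a.1 * b.2.1 + a.2.1 * b.1 - θ a.1 * a.1 * b.1)) :
    (∀ a b c, mul (mul a b) c = mul a (mul b c)) ∧
    (∀ a, mul ((0 : K), (0 : K), (0 : K)) a = a) ∧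
    (∀ a, mul a ((0 : K), (0 : K), (0 : K)) = a) ∧
    (∀ r s t : K,
      mul (r, s, t) (-r, -s + θ r * r, -t) = ((0 : K), (0 : K), (0 : K)) ∧
      mul (-r, -s + θ r * r, -t) (r, s, t) = ((0 : K), (0 : K), (0 : K))) := by
  have h3 : (3 : K) = 0 := by exact_mod_cast CharP.cast_eq_zero K 3
  refine ⟨fun a b c => ?_, fun a => ?_, fun a => ?_, fun r s t => ⟨?_, ?_⟩⟩
  · simp only [hmul, map_add, map_neg, Prod.mk.injEq]
    exact ⟨by ring, by ring, by
      ring⟩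
  · obtain ⟨x, y, z⟩ := a
    simp [hmul]
  · obtain ⟨x, y, z⟩ := a
    simp [hmul]
  · simp only [hmul, map_add, map_neg, Prod.mk.injEq]
    exact ⟨by ring, by ring, by ring⟩
  · simp only [hmul, map_add, map_neg, Prod.mk.injEq]
    exact ⟨by ring, by ring, by ring⟩
end

section
/- Let K be a field of characteristic p with Tits endomorphism θ (θ∘θ = Frobenius x ↦ x^p), extended to the rational function field K(s,t) by s^θ = t and t^θ = s^p. Define ν on the polynomial ring K[s,t] by ν(Σ a_{ij} s^i t^j) = min{i + √p·j : a_{ij} ≠ 0}, and on K(s,t) by ν(P/Q) = ν(P) − ν(Q). Then ν is a well-defined valuation on K(s,t) (ν(fg) = ν(f)+ν(g) and ν(f+g) ≥ min{ν(f),ν(g)}) and it is θ-invariant: ν(f^θ) = √p·ν(f) for all nonzero f. -/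
/-!
Because `√p` is irrational, the weight `i + √p·j` of the monomial `sⁱtʲ` determines `(i, j)`, so
the minimum defining `ν` is attained at a single monomial of the support. For nonzero `P, Q` the
product of their minimal monomials is then the only product of monomials of minimal weight in `PQ`,
hence survives: `ν(PQ) = ν P + ν Q`, and `ν(P/Q) = ν P - ν Q` does not depend on the chosen
fraction. The twist `θ` sends `a sⁱtʲ` to `θ(a) s^{pj} tⁱ`, of weight `pj + √p·i = √p (i + √p·j)`;
it is injective on coefficients and on exponents, so it multiplies every weight in the support,
and in particular the least one, by `√p`.
-/

open MvPolynomial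

section FractionField

variable {R F : Type*} [CommRing R] [IsDomain R] [Field F] [Algebra R F] [IsFractionRing R F]

theorem IsFractionRing.exists_ne_zero_eq_div {f : F} (hf : f ≠ 0) :
    ∃ P Q : R, P ≠ 0 ∧ Q ≠ 0 ∧ f = algebraMap R F P / algebraMap R F Q := by
  obtain ⟨P, Q, hQ, rfl⟩ := IsFractionRing.div_surjective (A := R) f
  refine ⟨P, Q, ?_, nonZeroDivisors.ne_zero hQ, rfl⟩
  rintro rfl
  simp at hf

noncomputable def extendToFractions (v : R → ℝ) (f : F) : ℝ :=
  v (IsLocalization.sec (nonZeroDivisors R) f).1 - v (IsLocalization.sec (nonZeroDivisors R) f).2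

variable {v : R → ℝ}

theorem extendToFractions_div (hv : ∀ P Q, P ≠ 0 → Q ≠ 0 → v (P * Q) = v P + v Q)
    {P Q : R} (hP : P ≠ 0) (hQ : Q ≠ 0) :
    extendToFractions v (algebraMap R F P / algebraMap R F Q) = v P - v Q := by
  have hφ := IsFractionRing.injective R F
  have hspec := IsLocalization.sec_spec (nonZeroDivisors R) (algebraMap R F P / algebraMap R F Q)
  set a := (IsLocalization.sec (nonZeroDivisors R) (algebraMap R F P / algebraMap R F Q)).1
  set b := ((IsLocalization.sec (nonZeroDivisors R) (algebraMap R F P / algebraMap R F Q)).2 : R)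
  have hb : b ≠ 0 := nonZeroDivisors.coe_ne_zero _
  have hQF : algebraMap R F Q ≠ 0 := (map_ne_zero_iff _ hφ).2 hQ
  have hcross : a * Q = P * b := hφ <| by
    rw [map_mul, map_mul, ← hspec]
    field_simp
  have ha : a ≠ 0 := by
    intro ha
    rw [ha, zero_mul] at hcross
    exact mul_ne_zero hP hb hcross.symm
  have := hv a Q ha hQ
  rw [hcross, hv P b hP hb] at this
  unfold extendToFractions
  linarith

theorem extendToFractions_mul (hv : ∀ P Q, P ≠ 0 → Q ≠ 0 → v (P * Q) = v P + v Q)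
    {f g : F} (hf : f ≠ 0) (hg : g ≠ 0) :
    extendToFractions v (f * g) = extendToFractions v f + extendToFractions v g := by
  obtain ⟨a, b, ha, hb, rfl⟩ := IsFractionRing.exists_ne_zero_eq_div (R := R) hf
  obtain ⟨c, d, hc, hd, rfl⟩ := IsFractionRing.exists_ne_zero_eq_div (R := R) hg
  rw [div_mul_div_comm, ← map_mul, ← map_mul, extendToFractions_div hv (mul_ne_zero ha hc)
    (mul_ne_zero hb hd), extendToFractions_div hv ha hb, extendToFractions_div hv hc hd,
    hv a c ha hc, hv b d hb hd]
  ring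

theorem min_le_extendToFractions_add (hv : ∀ P Q, P ≠ 0 → Q ≠ 0 → v (P * Q) = v P + v Q)
    (hv_add : ∀ P Q, P ≠ 0 → Q ≠ 0 → P + Q ≠ 0 → min (v P) (v Q) ≤ v (P + Q))
    {f g : F} (hf : f ≠ 0) (hg : g ≠ 0) (hfg : f + g ≠ 0) :
    min (extendToFractions v f) (extendToFractions v g) ≤ extendToFractions v (f + g) := by
  obtain ⟨a, b, ha, hb, rfl⟩ := IsFractionRing.exists_ne_zero_eq_div (R := R) hf
  obtain ⟨c, d, hc, hd, rfl⟩ := IsFractionRing.exists_ne_zero_eq_div (R := R) hg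
  have hbF : algebraMap R F b ≠ 0 := (map_ne_zero_iff _ (IsFractionRing.injective R F)).2 hb
  have hdF : algebraMap R F d ≠ 0 := (map_ne_zero_iff _ (IsFractionRing.injective R F)).2 hd
  have hsum : algebraMap R F a / algebraMap R F b + algebraMap R F c / algebraMap R F d =
      algebraMap R F (a * d + b * c) / algebraMap R F (b * d) := by
    rw [div_add_div _ _ hbF hdF]
    simp only [map_add, map_mul]
  have hnum : a * d + b * c ≠ 0 := by
    rintro h
    rw [h, map_zero, zero_div] at hsum
    exact hfg hsum
  rw [hsum, extendToFractions_div hv hnum (mul_ne_zero hb hd), extendToFractions_div hv ha hb,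
    extendToFractions_div hv hc hd, hv b d hb hd]
  have := hv_add _ _ (mul_ne_zero ha hd) (mul_ne_zero hb hc) hnum
  rw [hv a d ha hd, hv b c hb hc] at this
  calc min (v a - v b) (v c - v d)
        = min (v a + v d) (v b + v c) - (v b + v d) := by
          rw [← min_sub_sub_right]; congr 1 <;> ring
    _ ≤ v (a * d + b * c) - (v b + v d) := by gcongr

theorem extendToFractions_map (hv : ∀ P Q, P ≠ 0 → Q ≠ 0 → v (P * Q) = v P + v Q)
    (θR : R →+* R) (θF : F →+* F) (hθF : ∀ P, θF (algebraMap R F P) = algebraMap R F (θR P))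
    {c : ℝ} (hvθ : ∀ P, P ≠ 0 → v (θR P) = c * v P) {f : F} (hf : f ≠ 0) :
    extendToFractions v (θF f) = c * extendToFractions v f := by
  obtain ⟨a, b, ha, hb, rfl⟩ := IsFractionRing.exists_ne_zero_eq_div (R := R) hf
  have hθ_ne {P : R} (hP : P ≠ 0) : θR P ≠ 0 := by
    intro h
    have : θF (algebraMap R F P) = 0 := by rw [hθF, h, map_zero]
    rw [map_eq_zero_iff _ θF.injective, map_eq_zero_iff _ (IsFractionRing.injective R F)] at this
    exact hP this
  rw [map_div₀, hθF, hθF, extendToFractions_div hv (hθ_ne ha) (hθ_ne hb),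
    extendToFractions_div hv ha hb, hvθ a ha, hvθ b hb]
  ring

end FractionField

section WeightedOrder

variable {σ R M : Type*} [CommSemiring R] [LinearOrder M]

theorem MvPolynomial.min_le_of_mem_weight_support_add {w : (σ →₀ ℕ) → M}
    {P Q : MvPolynomial σ R} {a b c : M} (hP : a ∈ lowerBounds (w '' P.support))
    (hQ : b ∈ lowerBounds (w '' Q.support)) (hPQ : c ∈ w '' (P + Q).support) :
    min a b ≤ c := by
  classical
  obtain ⟨d, hd, rfl⟩ := hPQ
  rcases Finset.mem_union.1 (support_add hd) with h | h
  · exact min_le_of_left_le (hP ⟨d, h, rfl⟩)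
  · exact min_le_of_right_le (hQ ⟨d, h, rfl⟩)

variable [NoZeroDivisors R] [AddCommMonoid M] [IsOrderedCancelAddMonoid M]

theorem MvPolynomial.isLeast_weight_support_mul {w : (σ →₀ ℕ) →+ M}
    (hw : Function.Injective w) {P Q : MvPolynomial σ R} {a b : M}
    (hP : IsLeast (w '' P.support) a) (hQ : IsLeast (w '' Q.support) b) :
    IsLeast (w '' (P * Q).support) (a + b) := by
  classical
  obtain ⟨⟨dP, hdP, rfl⟩, hP⟩ := hP
  obtain ⟨⟨dQ, hdQ, rfl⟩, hQ⟩ := hQ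
  have hunique : UniqueAdd P.support Q.support dP dQ := by
    intro x y hx hy hxy
    have hx_le : w x ≤ w dP := le_of_add_le_add_right <| calc
      w x + w y = w dP + w dQ := by rw [← map_add, hxy, map_add]
      _ ≤ w dP + w y := by gcongr; exact hQ ⟨y, hy, rfl⟩
    obtain rfl : x = dP := hw (le_antisymm hx_le (hP ⟨x, hx, rfl⟩))
    exact ⟨rfl, add_left_cancel hxy⟩
  refine ⟨⟨dP + dQ, ?_, map_add w dP dQ⟩, ?_⟩
  · rw [Finset.mem_coe, mem_support_iff]
    exact (AddMonoidAlgebra.coeff_mul_add_of_uniqueAdd hunique).trans_ne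
      (mul_ne_zero (mem_support_iff.1 hdP) (mem_support_iff.1 hdQ))
  · rintro _ ⟨d, hd, rfl⟩
    obtain ⟨x, hx, y, hy, rfl⟩ := Finset.mem_add.1 (support_mul P Q hd)
    rw [map_add]
    exact add_le_add (hP ⟨x, hx, rfl⟩) (hQ ⟨y, hy, rfl⟩)

end WeightedOrder

noncomputable def linearWeight (α : ℝ) : (Fin 2 →₀ ℕ) →+ ℝ where
  toFun d := d 0 + α * d 1
  map_zero' := by simp
  map_add' d e := by simp only [Finsupp.add_apply, Nat.cast_add]; ring

theorem linearWeight_apply (α : ℝ) (d : Fin 2 →₀ ℕ) : linearWeight α d = d 0 + α * d 1 := rfl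

theorem linearWeight_injective {α : ℝ} (hα : Irrational α) :
    Function.Injective (linearWeight α) := by
  intro d e h
  simp only [linearWeight_apply] at h
  have h1 : d 1 = e 1 := by
    by_contra hne
    have hm : ((d 1 : ℤ) - e 1) ≠ 0 := sub_ne_zero.2 (by exact_mod_cast hne)
    apply (hα.mul_intCast hm).ne_int ((e 0 : ℤ) - d 0)
    push_cast
    linarith
  have h0 : d 0 = e 0 := by
    rw [h1] at h
    exact_mod_cast add_right_cancel h
  ext i
  fin_cases i <;> assumption

-- The exponent of `θ(sⁱ tʲ) = s^{pj} tⁱ`, with `s = X 0` and `t = X 1`.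
noncomputable def titsExponent (p : ℕ) : (Fin 2 →₀ ℕ) →+ (Fin 2 →₀ ℕ) where
  toFun d := Finsupp.single 0 (p * d 1) + Finsupp.single 1 (d 0)
  map_zero' := by simp
  map_add' d e := by ext i; fin_cases i <;> simp [mul_add]

@[simp]
theorem titsExponent_apply_zero (p : ℕ) (d : Fin 2 →₀ ℕ) : titsExponent p d 0 = p * d 1 := by
  simp [titsExponent]

@[simp]
theorem titsExponent_apply_one (p : ℕ) (d : Fin 2 →₀ ℕ) : titsExponent p d 1 = d 0 := by
  simp [titsExponent]

theorem titsExponent_injective {p : ℕ} (hp : p ≠ 0) : Function.Injective (titsExponent p) := by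
  intro d e h
  have h0 := congr($h 1)
  have h1 := congr($h 0)
  simp only [titsExponent_apply_zero, titsExponent_apply_one, mul_right_inj' hp] at h0 h1
  ext i
  fin_cases i <;> assumption

theorem linearWeight_titsExponent {α : ℝ} {p : ℕ} (hα : α * α = p) (d : Fin 2 →₀ ℕ) :
    linearWeight α (titsExponent p d) = α * linearWeight α d := by
  simp only [linearWeight_apply, titsExponent_apply_zero, titsExponent_apply_one, Nat.cast_mul,
    ← hα]
  ring

theorem titsExponent_single_zero (p : ℕ) :
    titsExponent p (Finsupp.single 0 1) = Finsupp.single 1 1 := by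
  ext j; fin_cases j <;> simp

theorem titsExponent_single_one (p : ℕ) :
    titsExponent p (Finsupp.single 1 1) = Finsupp.single 0 p := by
  ext j; fin_cases j <;> simp

theorem eq_mapDomainRingHom_titsExponent_comp_map {K : Type*} [CommSemiring K] {p : ℕ} {θ : K →+* K}
    {θA : MvPolynomial (Fin 2) K →+* MvPolynomial (Fin 2) K}
    (hθA1 : θA (X 0) = X 1) (hθA2 : θA (X 1) = X 0 ^ p) (hθA3 : ∀ a : K, θA (C a) = C (θ a)) :
    θA = (AddMonoidAlgebra.mapDomainRingHom K (titsExponent p)).comp (map θ) := by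
  have hmono (d : Fin 2 →₀ ℕ) (a : K) : AddMonoidAlgebra.mapDomainRingHom K (titsExponent p)
      (monomial d a) = monomial (titsExponent p d) a :=
    AddMonoidAlgebra.mapDomain_single
  refine ringHom_ext (fun a => ?_) (Fin.forall_fin_two.2 ⟨?_, ?_⟩)
  · rw [RingHom.comp_apply, map_C, hθA3, C_apply, hmono, map_zero]
  · rw [RingHom.comp_apply, map_X, hθA1, X, X, hmono, titsExponent_single_zero]
  · rw [RingHom.comp_apply, map_X, hθA2, X_pow_eq_monomial, X, hmono,
      titsExponent_single_one]

theorem MvPolynomial.support_mapDomain_map_of_injective {σ τ K L : Type*} [CommSemiring K]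
    [CommSemiring L] [DecidableEq (τ →₀ ℕ)] {f : (σ →₀ ℕ) →+ (τ →₀ ℕ)}
    (hf : Function.Injective f) {θ : K →+* L} (hθ : Function.Injective θ) (P : MvPolynomial σ K) :
    support (AddMonoidAlgebra.mapDomainRingHom L f (map θ P) : MvPolynomial τ L) =
      P.support.image f := by
  rw [← support_map_of_injective P hθ]
  exact Finsupp.mapDomain_support_of_injective hf _

theorem isLeast_linearWeight_mapDomain_titsExponent_map {K : Type*} [CommSemiring K] {α : ℝ} {p : ℕ}
    (hα0 : 0 ≤ α) (hα : α * α = p) (hp : p ≠ 0) {θ : K →+* K} (hθ : Function.Injective θ)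
    {P : MvPolynomial (Fin 2) K} {a : ℝ} (h : IsLeast (linearWeight α '' P.support) a) :
    IsLeast (linearWeight α '' support
      (AddMonoidAlgebra.mapDomainRingHom K (titsExponent p) (map θ P) : MvPolynomial (Fin 2) K))
      (α * a) := by
  classical
  rw [support_mapDomain_map_of_injective (titsExponent_injective hp) hθ, Finset.coe_image,
    Set.image_image]
  simp only [linearWeight_titsExponent hα]
  rw [← Set.image_image (α * ·)]
  exact (monotone_mul_left_of_nonneg hα0).map_isLeast h

theorem stmt13_general {K : Type*} [Field K] (p : ℕ) (hp : p.Prime)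
    (θ : K →+* K)
    (νA : MvPolynomial (Fin 2) K → ℝ)
    (hνA : ∀ P : MvPolynomial (Fin 2) K, P ≠ 0 →
      IsLeast {r : ℝ | ∃ d ∈ P.support, r = (d 0 : ℝ) + Real.sqrt p * (d 1 : ℝ)} (νA P))
    (θA : MvPolynomial (Fin 2) K →+* MvPolynomial (Fin 2) K)
    (hθA1 : θA (MvPolynomial.X 0) = MvPolynomial.X 1)
    (hθA2 : θA (MvPolynomial.X 1) = (MvPolynomial.X 0) ^ p)
    (hθA3 : ∀ a : K, θA (MvPolynomial.C a) = MvPolynomial.C (θ a))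
    (θF : FractionRing (MvPolynomial (Fin 2) K) →+* FractionRing (MvPolynomial (Fin 2) K))
    (hθF : ∀ P : MvPolynomial (Fin 2) K,
      θF (algebraMap (MvPolynomial (Fin 2) K) (FractionRing (MvPolynomial (Fin 2) K)) P)
        = algebraMap (MvPolynomial (Fin 2) K) (FractionRing (MvPolynomial (Fin 2) K))
            (θA P)) :
    ∃ ν : FractionRing (MvPolynomial (Fin 2) K) → ℝ,
      (∀ P Q : MvPolynomial (Fin 2) K, P ≠ 0 → Q ≠ 0 →
        ν (algebraMap (MvPolynomial (Fin 2) K) (FractionRing (MvPolynomial (Fin 2) K)) P /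
            algebraMap (MvPolynomial (Fin 2) K) (FractionRing (MvPolynomial (Fin 2) K)) Q)
          = νA P - νA Q) ∧
      (∀ f g, f ≠ 0 → g ≠ 0 → ν (f * g) = ν f + ν g) ∧
      (∀ f g, f ≠ 0 → g ≠ 0 → f + g ≠ 0 → min (ν f) (ν g) ≤ ν (f + g)) ∧
      (∀ f, f ≠ 0 → ν (θF f) = Real.sqrt p * ν f) := by
  have hν : ∀ P : MvPolynomial (Fin 2) K, P ≠ 0 →
      IsLeast (linearWeight (Real.sqrt p) '' P.support) (νA P) := fun P hP => by
    convert hνA P hP using 1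
    ext r
    simp [linearWeight_apply, eq_comm]
  have hmul : ∀ P Q : MvPolynomial (Fin 2) K, P ≠ 0 → Q ≠ 0 → νA (P * Q) = νA P + νA Q :=
    fun P Q hP hQ => (hν _ (mul_ne_zero hP hQ)).unique
      (isLeast_weight_support_mul (linearWeight_injective hp.irrational_sqrt) (hν P hP) (hν Q hQ))
  have hθν : ∀ P : MvPolynomial (Fin 2) K, P ≠ 0 → νA (θA P) = Real.sqrt p * νA P := by
    intro P hP
    have h := isLeast_linearWeight_mapDomain_titsExponent_map (Real.sqrt_nonneg p)
      (Real.mul_self_sqrt p.cast_nonneg) hp.ne_zero θ.injective (hν P hP)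
    rw [← RingHom.comp_apply, ← eq_mapDomainRingHom_titsExponent_comp_map hθA1 hθA2 hθA3] at h
    refine (hν _ fun h0 => ?_).unique h
    simpa [h0] using h.nonempty
  refine ⟨extendToFractions νA, fun P Q hP hQ => extendToFractions_div hmul hP hQ,
    fun f g hf hg => extendToFractions_mul hmul hf hg, fun f g hf hg hfg => ?_,
    fun f hf => extendToFractions_map hmul θA θF hθF hθν hf⟩
  refine min_le_extendToFractions_add hmul (fun P Q hP hQ hPQ => ?_) hf hg hfg
  exact min_le_of_mem_weight_support_add (hν P hP).2 (hν Q hQ).2 (hν _ hPQ).1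

/-- The valuation `ν(Σ a_{ij} sⁱ tʲ) = min{i + √p·j : a_{ij} ≠ 0}` on `K[s,t]` extends to
a well-defined valuation on the quotient field `K(s,t)` via `ν(P/Q) = ν(P) − ν(Q)`, and
this valuation is `θ`-invariant (`ν(f^θ) = √p·ν(f)`) for the extension of the Tits
endomorphism `θ` with `s^θ = t`, `t^θ = s^p`. -/
theorem stmt13 {K : Type*} [Field K] (p : ℕ) (hp : p.Prime) [CharP K p]
    (θ : K →+* K) (hθ : ∀ x, θ (θ x) = x ^ p)
    (νA : MvPolynomial (Fin 2) K → ℝ)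
    (hνA : ∀ P : MvPolynomial (Fin 2) K, P ≠ 0 →
      IsLeast {r : ℝ | ∃ d ∈ P.support, r = (d 0 : ℝ) + Real.sqrt p * (d 1 : ℝ)} (νA P))
    (θA : MvPolynomial (Fin 2) K →+* MvPolynomial (Fin 2) K)
    (hθA1 : θA (MvPolynomial.X 0) = MvPolynomial.X 1)
    (hθA2 : θA (MvPolynomial.X 1) = (MvPolynomial.X 0) ^ p)
    (hθA3 : ∀ a : K, θA (MvPolynomial.C a) = MvPolynomial.C (θ a))
    (θF : FractionRing (MvPolynomial (Fin 2) K) →+* FractionRing (MvPolynomial (Fin 2) K))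
    (hθF : ∀ P : MvPolynomial (Fin 2) K,
      θF (algebraMap (MvPolynomial (Fin 2) K) (FractionRing (MvPolynomial (Fin 2) K)) P)
        = algebraMap (MvPolynomial (Fin 2) K) (FractionRing (MvPolynomial (Fin 2) K))
            (θA P)) :
    ∃ ν : FractionRing (MvPolynomial (Fin 2) K) → ℝ,
      (∀ P Q : MvPolynomial (Fin 2) K, P ≠ 0 → Q ≠ 0 →
        ν (algebraMap (MvPolynomial (Fin 2) K) (FractionRing (MvPolynomial (Fin 2) K)) P /
            algebraMap (MvPolynomial (Fin 2) K) (FractionRing (MvPolynomial (Fin 2) K)) Q)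
          = νA P - νA Q) ∧
      (∀ f g, f ≠ 0 → g ≠ 0 → ν (f * g) = ν f + ν g) ∧
      (∀ f g, f ≠ 0 → g ≠ 0 → f + g ≠ 0 → min (ν f) (ν g) ≤ ν (f + g)) ∧
      (∀ f, f ≠ 0 → ν (θF f) = Real.sqrt p * ν f) :=
  stmt13_general p hp θ νA hνA θA hθA1 hθA2 hθA3 θF hθF
end
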